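/- For any positive semidefinite operators $A, B$ on a finite-dimensional Hilbert space, $\frac{1}{2}\operatorname{Tr}(A+B) - \frac{1}{2}\|A-B\|_1 \le F(A,B) \le \sqrt{\frac{1}{4}(\operatorname{Tr}(A+B))^2 - \frac{1}{4}\|A-B\|_1^2}$. -/

import Mathlib

open Matrix
open scoped ComplexOrder

noncomputable def matAbs {m : ℕ} (A : Matrix (Fin m) (Fin m) ℂ) : Matrix (Fin m) (Fin m) ℂ :=
  (Matrix.posSemidef_conjTranspose_mul_self A).1.eigenvectorUnitary.1 *
    diagonal ((↑) ∘ (√·) ∘ (Matrix.posSemidef_conjTranspose_mul_self A).1.eigenvalues) *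
    (star (Matrix.posSemidef_conjTranspose_mul_self A).1.eigenvectorUnitary : Matrix (Fin m) (Fin m) ℂ)

noncomputable def traceNorm {m : ℕ} (A : Matrix (Fin m) (Fin m) ℂ) : ℝ :=
  ((matAbs A).trace).re

open Classical in
noncomputable def psdSqrt {m : ℕ} (A : Matrix (Fin m) (Fin m) ℂ) : Matrix (Fin m) (Fin m) ℂ :=
  if h : A.PosSemidef then h.1.eigenvectorUnitary.1 * diagonal ((↑) ∘ (√·) ∘ h.1.eigenvalues) *
    (star h.1.eigenvectorUnitary : Matrix (Fin m) (Fin m) ℂ) else 0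

noncomputable def fid {m : ℕ} (A B : Matrix (Fin m) (Fin m) ℂ) : ℝ :=
  traceNorm (psdSqrt A * psdSqrt B)

noncomputable def matPosPart {m : ℕ} (A : Matrix (Fin m) (Fin m) ℂ) : Matrix (Fin m) (Fin m) ℂ :=
  (2⁻¹ : ℂ) • (matAbs A + A)

noncomputable def matNegPart {m : ℕ} (A : Matrix (Fin m) (Fin m) ℂ) : Matrix (Fin m) (Fin m) ℂ :=
  (2⁻¹ : ℂ) • (matAbs A - A)

/-!
With `S = √A` and `T = √B`, the lower bound is the Powers–Størmer inequality
`‖S - T‖₂² ≤ ‖S² - T²‖₁`: since `2 (S² - T²) = (S - T) (S + T) + (S + T) (S - T)`, testing against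
the unitary `E = sign (S - T)` gives `Re tr (E (S² - T²)) = Re tr (|S - T| (S + T))`, which dominates
`tr ((S - T)²) = tr (A + B) - 2 Re tr (S T)` because `|S - T| ∓ (S - T) ≥ 0`; and
`Re tr (S T) ≤ ‖S T‖₁ = F`.

For the upper bound, the polar decomposition of `S T` yields `R` with `Rᴴ R = B` and
`Re tr (S R) = F`. Then `2 (A - B) = Pᴴ Q + Qᴴ P` for `P = S - R`, `Q = S + R`, and Cauchy–Schwarz
for the trace inner product gives `‖A - B‖₁ ≤ ‖P‖₂ ‖Q‖₂ = √((tr (A + B) - 2F) (tr (A + B) + 2F))`.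

Both halves rest on `‖X‖₁ = max Re tr (W X)` over unitaries `W`, a consequence of the polar
decomposition `X = V |X|`.
-/

open scoped MatrixOrder InnerProductSpace

namespace Matrix

variable {n 𝕜 : Type*} [Fintype n] [RCLike 𝕜]

lemma inner_mulVec_mulVec (X : Matrix n n 𝕜) (a b : EuclideanSpace 𝕜 n) :
    ⟪WithLp.toLp 2 (X *ᵥ a), WithLp.toLp 2 (X *ᵥ b)⟫_𝕜 =
      ⟪a, WithLp.toLp 2 ((Xᴴ * X) *ᵥ b)⟫_𝕜 := by
  simp only [EuclideanSpace.inner_eq_star_dotProduct, star_mulVec]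
  rw [dotProduct_comm, ← dotProduct_mulVec, mulVec_mulVec, dotProduct_comm]

lemma norm_trace_conjTranspose_mul_le (P Q : Matrix n n 𝕜) :
    ‖(Pᴴ * Q).trace‖ ≤ √(RCLike.re (Pᴴ * P).trace) * √(RCLike.re (Qᴴ * Q).trace) := by
  let vec (M : Matrix n n 𝕜) : EuclideanSpace 𝕜 (n × n) := WithLp.toLp 2 fun p => M p.1 p.2
  have h (M N : Matrix n n 𝕜) : (Mᴴ * N).trace = ⟪vec M, vec N⟫_𝕜 := by
    simp only [trace, diag, mul_apply, conjTranspose_apply, EuclideanSpace.inner_eq_star_dotProduct,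
      dotProduct, Fintype.sum_prod_type, Pi.star_apply, vec]
    rw [Finset.sum_comm]
    simp_rw [mul_comm]
  rw [h, h, h, ← norm_eq_sqrt_re_inner, ← norm_eq_sqrt_re_inner]
  exact norm_inner_le_norm _ _

variable [DecidableEq n]

lemma PosSemidef.sqrt_eq_spectral {A : Matrix n n 𝕜} (hA : A.PosSemidef) :
    CFC.sqrt A = (hA.1.eigenvectorUnitary : Matrix n n 𝕜) *
      diagonal (RCLike.ofReal ∘ Real.sqrt ∘ hA.1.eigenvalues) *
      star (hA.1.eigenvectorUnitary : Matrix n n 𝕜) := by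
  rw [CFC.sqrt_eq_real_sqrt A (nonneg_iff_posSemidef.mpr hA), cfcₙ_eq_cfc, hA.1.cfc_eq]
  rfl

lemma abs_eq_sqrt_conjTranspose_mul_self (X : Matrix n n 𝕜) :
    CFC.abs X = CFC.sqrt (Xᴴ * X) :=
  rfl

lemma posSemidef_sqrt (A : Matrix n n 𝕜) : (CFC.sqrt A).PosSemidef :=
  nonneg_iff_posSemidef.mp (CFC.sqrt_nonneg A)

lemma PosSemidef.sqrt_mul_sqrt {A : Matrix n n 𝕜} (hA : A.PosSemidef) :
    CFC.sqrt A * CFC.sqrt A = A :=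
  CFC.sqrt_mul_sqrt_self A (nonneg_iff_posSemidef.mpr hA)

lemma inner_mulVec_eigenvectorBasis {X : Matrix n n 𝕜} (hH : (Xᴴ * X).IsHermitian) (j k : n) :
    ⟪WithLp.toLp 2 (X *ᵥ hH.eigenvectorBasis j), WithLp.toLp 2 (X *ᵥ hH.eigenvectorBasis k)⟫_𝕜 =
      if j = k then (hH.eigenvalues k : 𝕜) else 0 := by
  rw [inner_mulVec_mulVec, hH.mulVec_eigenvectorBasis, WithLp.toLp_smul, WithLp.toLp_ofLp,
    inner_smul_right_eq_smul, orthonormal_iff_ite.mp hH.eigenvectorBasis.orthonormal, smul_ite,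
    smul_zero, RCLike.real_smul_eq_coe_mul, mul_one]

/-- With `uⱼ`, `λⱼ` the eigenpairs of `Xᴴ X`, the vectors `X uⱼ` are orthogonal with
`‖X uⱼ‖² = λⱼ`; normalising the nonzero ones and completing them to an orthonormal basis gives the
columns of `W`. -/
lemma exists_mul_eigenvectorUnitary_eq {X : Matrix n n 𝕜} (hX : (Xᴴ * X).PosSemidef) :
    ∃ W ∈ unitaryGroup n 𝕜, X * (hX.1.eigenvectorUnitary : Matrix n n 𝕜) =
      W * diagonal (RCLike.ofReal ∘ Real.sqrt ∘ hX.1.eigenvalues) := by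
  set ev := hX.1.eigenvalues
  let x (j : n) : EuclideanSpace 𝕜 n := WithLp.toLp 2 (X *ᵥ hX.1.eigenvectorBasis j)
  have hx : ∀ j k, ⟪x j, x k⟫_𝕜 = if j = k then (ev k : 𝕜) else 0 :=
    inner_mulVec_eigenvectorBasis hX.1
  let v (j : n) : EuclideanSpace 𝕜 n := ((√(ev j) : 𝕜))⁻¹ • x j
  have hv : Orthonormal 𝕜 ({j | ev j ≠ 0}.domRestrict v) := by
    rw [orthonormal_iff_ite]
    rintro ⟨j, hj⟩ ⟨k, hk⟩
    simp only [Set.domRestrict_apply, v, inner_smul_left, inner_smul_right, hx, Subtype.mk.injEq]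
    split_ifs with hjk
    · subst hjk
      rw [RCLike.conj_inv, RCLike.conj_ofReal, ← mul_assoc, ← mul_inv, ← RCLike.ofReal_mul,
        Real.mul_self_sqrt (hX.eigenvalues_nonneg j), inv_mul_cancel₀ (by exact_mod_cast hj)]
    · simp
  obtain ⟨b, hb⟩ := hv.exists_orthonormalBasis_extension_of_card_eq (by simp)
  refine ⟨(EuclideanSpace.basisFun n 𝕜).toBasis.toMatrix b.toBasis,
    (EuclideanSpace.basisFun n 𝕜).toMatrix_orthonormalBasis_mem_unitary b, ?_⟩
  ext i j
  rw [mul_diagonal]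
  change x j i = b j i * _
  by_cases hj : ev j = 0
  · have : x j = 0 := by rw [← inner_self_eq_zero (𝕜 := 𝕜), hx, if_pos rfl, hj, RCLike.ofReal_zero]
    simp [this, hj]
  · have hsqrt : (√(ev j) : 𝕜) ≠ 0 := by
      exact_mod_cast (Real.sqrt_pos.mpr ((hX.eigenvalues_nonneg j).lt_of_ne' hj)).ne'
    simp only [hb j hj, v, PiLp.smul_apply, smul_eq_mul, Function.comp_apply]
    rw [mul_comm, ← mul_assoc, mul_inv_cancel₀ hsqrt, one_mul]

theorem exists_unitary_mul_abs (X : Matrix n n 𝕜) :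
    ∃ V ∈ unitaryGroup n 𝕜, X = V * CFC.abs X := by
  have hX := posSemidef_conjTranspose_mul_self X
  obtain ⟨W, hW, hXU⟩ := exists_mul_eigenvectorUnitary_eq hX
  have hU := hX.1.eigenvectorUnitary.2
  set U : Matrix n n 𝕜 := (hX.1.eigenvectorUnitary : Matrix n n 𝕜)
  refine ⟨W * star U, mul_mem hW (Unitary.star_mem hU), ?_⟩
  rw [abs_eq_sqrt_conjTranspose_mul_self, hX.sqrt_eq_spectral]
  calc X = X * U * star U := by rw [mul_assoc, Unitary.mul_star_self_of_mem hU, mul_one]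
    _ = W * star U * (U * diagonal (RCLike.ofReal ∘ Real.sqrt ∘ hX.1.eigenvalues) * star U) := by
      rw [hXU, mul_assoc W (star U), ← mul_assoc (star U), ← mul_assoc (star U),
        Unitary.star_mul_self_of_mem hU, one_mul, mul_assoc]

theorem IsHermitian.exists_unitary_mul_eq_abs {P : Matrix n n 𝕜} (hP : P.IsHermitian) :
    ∃ E ∈ unitaryGroup n 𝕜, E * P = CFC.abs P ∧ P * E = CFC.abs P := by
  have hP' : IsSelfAdjoint P := hP
  have hcont (f : ℝ → ℝ) : ContinuousOn f (spectrum ℝ P) := P.finite_real_spectrum.continuousOn f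
  -- `σ` is discontinuous, but the spectrum of a matrix is finite, so `cfc σ P` is the sign of `P`.
  let σ : ℝ → ℝ := fun x => if 0 ≤ x then 1 else -1
  have hσ : ∀ x, σ x * x = ‖x‖ := fun x => by
    by_cases hx : 0 ≤ x <;> simp [σ, hx, abs_of_nonneg, abs_of_neg, not_le.mp]
  refine ⟨cfc σ P, ?_, ?_, ?_⟩
  · rw [cfc_unitary_iff σ P hP' (hcont σ)]
    intro x _
    by_cases hx : 0 ≤ x <;> simp [σ, hx]
  · nth_rw 2 [← cfc_id' ℝ P]
    rw [← cfc_mul σ (fun x => x) P (hcont σ) (hcont _), CFC.abs_eq_cfc_norm P hP']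
    exact cfc_congr fun x _ => hσ x
  · nth_rw 1 [← cfc_id' ℝ P]
    rw [← cfc_mul (fun x => x) σ P (hcont _) (hcont σ), CFC.abs_eq_cfc_norm P hP']
    exact cfc_congr fun x _ => (mul_comm _ _).trans (hσ x)

lemma IsHermitian.posSemidef_abs_sub {P : Matrix n n 𝕜} (hP : P.IsHermitian) :
    (CFC.abs P - P).PosSemidef := by
  rw [← nonneg_iff_posSemidef, CFC.abs_sub_self P hP]
  exact smul_nonneg zero_le_two (CFC.negPart_nonneg P)

lemma IsHermitian.posSemidef_abs_add {P : Matrix n n 𝕜} (hP : P.IsHermitian) :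
    (CFC.abs P + P).PosSemidef := by
  rw [← nonneg_iff_posSemidef, CFC.abs_add_self P hP]
  exact smul_nonneg zero_le_two (CFC.posPart_nonneg P)

lemma norm_trace_mul_conjTranspose_mul_le_of_mem_unitaryGroup {W : Matrix n n 𝕜}
    (hW : W ∈ unitaryGroup n 𝕜) (P Q : Matrix n n 𝕜) :
    ‖(W * (Pᴴ * Q)).trace‖ ≤ √(RCLike.re (Pᴴ * P).trace) * √(RCLike.re (Qᴴ * Q).trace) := by
  have hWP : ((P * Wᴴ)ᴴ * (P * Wᴴ)).trace = (Pᴴ * P).trace := by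
    rw [conjTranspose_mul, conjTranspose_conjTranspose, mul_assoc, ← mul_assoc Pᴴ, ← mul_assoc,
      trace_mul_cycle, ← star_eq_conjTranspose, Unitary.star_mul_self_of_mem hW, one_mul]
  have hWPQ : W * (Pᴴ * Q) = (P * Wᴴ)ᴴ * Q := by
    rw [conjTranspose_mul, conjTranspose_conjTranspose, mul_assoc]
  rw [hWPQ, ← hWP]
  exact norm_trace_conjTranspose_mul_le _ _

lemma PosSemidef.norm_trace_mul_le_of_mem_unitaryGroup {P W : Matrix n n 𝕜}
    (hP : P.PosSemidef) (hW : W ∈ unitaryGroup n 𝕜) :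
    ‖(W * P).trace‖ ≤ RCLike.re P.trace := by
  have h := norm_trace_mul_conjTranspose_mul_le_of_mem_unitaryGroup hW (CFC.sqrt P) (CFC.sqrt P)
  rwa [(posSemidef_sqrt P).1.eq, hP.sqrt_mul_sqrt,
    Real.mul_self_sqrt (RCLike.nonneg_iff.mp hP.trace_nonneg).1] at h

lemma PosSemidef.trace_mul_nonneg {M N : Matrix n n 𝕜} (hM : M.PosSemidef) (hN : N.PosSemidef) :
    0 ≤ (M * N).trace := by
  have h := (hN.mul_mul_conjTranspose_same (CFC.sqrt M)).trace_nonneg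
  rwa [(posSemidef_sqrt M).1.eq, trace_mul_cycle, hM.sqrt_mul_sqrt] at h

end Matrix

section TraceNorm

variable {m : ℕ}

lemma matAbs_eq_abs (X : Matrix (Fin m) (Fin m) ℂ) : matAbs X = CFC.abs X := by
  rw [abs_eq_sqrt_conjTranspose_mul_self, (posSemidef_conjTranspose_mul_self X).sqrt_eq_spectral]
  rfl

lemma psdSqrt_eq_sqrt {A : Matrix (Fin m) (Fin m) ℂ} (hA : A.PosSemidef) :
    psdSqrt A = CFC.sqrt A := by
  rw [psdSqrt, dif_pos hA, hA.sqrt_eq_spectral]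
  rfl

lemma fid_eq_traceNorm_sqrt_mul_sqrt {A B : Matrix (Fin m) (Fin m) ℂ} (hA : A.PosSemidef)
    (hB : B.PosSemidef) : fid A B = traceNorm (CFC.sqrt A * CFC.sqrt B) := by
  rw [fid, psdSqrt_eq_sqrt hA, psdSqrt_eq_sqrt hB]

lemma traceNorm_nonneg (X : Matrix (Fin m) (Fin m) ℂ) : 0 ≤ traceNorm X := by
  rw [traceNorm, matAbs_eq_abs]
  exact (Complex.nonneg_iff.mp (nonneg_iff_posSemidef.mp (CFC.abs_nonneg X)).trace_nonneg).1

lemma re_trace_mul_le_traceNorm_of_mem_unitaryGroup {W : Matrix (Fin m) (Fin m) ℂ}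
    (hW : W ∈ unitaryGroup (Fin m) ℂ) (X : Matrix (Fin m) (Fin m) ℂ) :
    (W * X).trace.re ≤ traceNorm X := by
  obtain ⟨V, hV, hX⟩ := exists_unitary_mul_abs X
  have h := (nonneg_iff_posSemidef.mp (CFC.abs_nonneg X)).norm_trace_mul_le_of_mem_unitaryGroup
    (mul_mem hW hV)
  rw [mul_assoc, ← hX] at h
  rw [traceNorm, matAbs_eq_abs]
  exact (Complex.re_le_norm _).trans h

lemma re_trace_le_traceNorm (X : Matrix (Fin m) (Fin m) ℂ) : X.trace.re ≤ traceNorm X := by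
  simpa using re_trace_mul_le_traceNorm_of_mem_unitaryGroup (one_mem _) X

lemma exists_traceNorm_eq_re_trace_mul (X : Matrix (Fin m) (Fin m) ℂ) :
    ∃ W ∈ unitaryGroup (Fin m) ℂ, traceNorm X = (W * X).trace.re := by
  obtain ⟨V, hV, hX⟩ := exists_unitary_mul_abs X
  refine ⟨star V, Unitary.star_mem hV, ?_⟩
  rw [traceNorm, matAbs_eq_abs]
  conv_rhs => rw [hX, ← mul_assoc, Unitary.star_mul_self_of_mem hV, one_mul]

lemma traceNorm_le_of_add_self_eq {X P Q : Matrix (Fin m) (Fin m) ℂ}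
    (h : X + X = Pᴴ * Q + Qᴴ * P) :
    traceNorm X ≤ √(Pᴴ * P).trace.re * √(Qᴴ * Q).trace.re := by
  obtain ⟨W, hW, hX⟩ := exists_traceNorm_eq_re_trace_mul X
  have h2 : 2 * traceNorm X = (W * (Pᴴ * Q)).trace.re + (W * (Qᴴ * P)).trace.re := by
    rw [hX, two_mul, ← Complex.add_re, ← trace_add, ← mul_add, h, mul_add, trace_add,
      Complex.add_re]
  have hPQ := norm_trace_mul_conjTranspose_mul_le_of_mem_unitaryGroup hW P Q
  have hQP := norm_trace_mul_conjTranspose_mul_le_of_mem_unitaryGroup hW Q P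
  simp only [RCLike.re_to_complex] at hPQ hQP
  linarith [Complex.re_le_norm (W * (Pᴴ * Q)).trace, Complex.re_le_norm (W * (Qᴴ * P)).trace,
    mul_comm √(Pᴴ * P).trace.re √(Qᴴ * Q).trace.re]

lemma re_trace_sub_mul_sub_le_traceNorm {S T : Matrix (Fin m) (Fin m) ℂ} (hS : S.PosSemidef)
    (hT : T.PosSemidef) : ((S - T) * (S - T)).trace.re ≤ traceNorm (S * S - T * T) := by
  have hP : (S - T).IsHermitian := hS.1.sub hT.1
  obtain ⟨E, hE, hEP, hPE⟩ := hP.exists_unitary_mul_eq_abs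
  set G := CFC.abs (S - T)
  have hsum : (S * S - T * T) + (S * S - T * T) = (S - T) * (S + T) + (S + T) * (S - T) := by
    noncomm_ring
  have hEX : (E * (S * S - T * T)).trace + (E * (S * S - T * T)).trace =
      (G * (S + T)).trace + (G * (S + T)).trace := by
    rw [← trace_add, ← mul_add, hsum, mul_add, trace_add, ← mul_assoc, hEP, ← mul_assoc,
      trace_mul_cycle, hPE]
  have hsplit : G * (S + T) = (S - T) * (S - T) + (G - (S - T)) * S + (G + (S - T)) * T := by
    noncomm_ring
  have hGS := (Complex.nonneg_iff.mp (hP.posSemidef_abs_sub.trace_mul_nonneg hS)).1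
  have hGT := (Complex.nonneg_iff.mp (hP.posSemidef_abs_add.trace_mul_nonneg hT)).1
  have hGQ : ((S - T) * (S - T)).trace.re ≤ (G * (S + T)).trace.re := by
    rw [hsplit, trace_add, trace_add, Complex.add_re, Complex.add_re]
    linarith
  have hEX' := congrArg Complex.re hEX
  simp only [Complex.add_re] at hEX'
  linarith [re_trace_mul_le_traceNorm_of_mem_unitaryGroup hE (S * S - T * T)]

lemma trace_add_sub_traceNorm_le_two_mul_fid {A B : Matrix (Fin m) (Fin m) ℂ}
    (hA : A.PosSemidef) (hB : B.PosSemidef) :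
    (A + B).trace.re - traceNorm (A - B) ≤ 2 * fid A B := by
  set S := CFC.sqrt A
  set T := CFC.sqrt B
  have hPS := re_trace_sub_mul_sub_le_traceNorm (posSemidef_sqrt A) (posSemidef_sqrt B)
  rw [hA.sqrt_mul_sqrt, hB.sqrt_mul_sqrt] at hPS
  have hexpand : ((S - T) * (S - T)).trace.re = (A + B).trace.re - 2 * (S * T).trace.re := by
    rw [sub_mul, mul_sub, mul_sub, hA.sqrt_mul_sqrt, hB.sqrt_mul_sqrt]
    simp only [trace_sub, trace_add, Complex.sub_re, Complex.add_re, trace_mul_comm T S]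
    ring
  rw [fid_eq_traceNorm_sqrt_mul_sqrt hA hB]
  linarith [re_trace_le_traceNorm (S * T)]

lemma exists_conjTranspose_mul_self_eq_and_re_trace_mul_eq_traceNorm
    {S T : Matrix (Fin m) (Fin m) ℂ} (hS : S.IsHermitian) (hT : T.IsHermitian) :
    ∃ R, Rᴴ * R = T * T ∧ (S * R).trace.re = traceNorm (S * T) := by
  obtain ⟨W, hW, hST⟩ := exists_traceNorm_eq_re_trace_mul (S * T)
  refine ⟨Wᴴ * T, ?_, ?_⟩
  · rw [conjTranspose_mul, conjTranspose_conjTranspose, hT.eq, mul_assoc, ← mul_assoc W,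
      ← star_eq_conjTranspose, Unitary.mul_star_self_of_mem hW, one_mul]
  · have htr : (S * (Wᴴ * T)).trace = star (W * (S * T)).trace := by
      rw [← trace_conjTranspose, conjTranspose_mul, conjTranspose_mul, hS.eq, hT.eq,
        ← mul_assoc, trace_mul_cycle]
    rw [hST, htr, Complex.star_def, Complex.conj_re]

lemma re_trace_conjTranspose_mul_self_add {S : Matrix (Fin m) (Fin m) ℂ} (hS : S.IsHermitian)
    (R : Matrix (Fin m) (Fin m) ℂ) :
    ((S + R)ᴴ * (S + R)).trace.re =
      (S * S).trace.re + (Rᴴ * R).trace.re + 2 * (S * R).trace.re := by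
  have hRS : (Rᴴ * S).trace.re = (S * R).trace.re := by
    rw [← hS.eq, ← conjTranspose_mul, trace_conjTranspose, hS.eq, Complex.star_def,
      Complex.conj_re]
  rw [conjTranspose_add, hS.eq, add_mul, mul_add, mul_add]
  simp only [trace_add, Complex.add_re, hRS]
  ring

lemma traceNorm_sub_sq_add_four_mul_fid_sq_le {A B : Matrix (Fin m) (Fin m) ℂ}
    (hA : A.PosSemidef) (hB : B.PosSemidef) :
    traceNorm (A - B) ^ 2 + 4 * fid A B ^ 2 ≤ (A + B).trace.re ^ 2 := by
  have hS := (posSemidef_sqrt A).1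
  obtain ⟨R, hRR, hSR⟩ :=
    exists_conjTranspose_mul_self_eq_and_re_trace_mul_eq_traceNorm hS (posSemidef_sqrt B).1
  rw [hB.sqrt_mul_sqrt] at hRR
  rw [← fid_eq_traceNorm_sqrt_mul_sqrt hA hB] at hSR
  set S := CFC.sqrt A
  set F := fid A B
  have ht : (A + B).trace.re = (S * S).trace.re + (Rᴴ * R).trace.re := by
    rw [hA.sqrt_mul_sqrt, hRR, trace_add, Complex.add_re]
  have hP := re_trace_conjTranspose_mul_self_add hS (-R)
  have hQ := re_trace_conjTranspose_mul_self_add hS R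
  simp only [conjTranspose_neg, neg_mul, mul_neg, neg_neg, trace_neg, Complex.neg_re, hSR,
    ← sub_eq_add_neg] at hP hQ
  have hX : (A - B) + (A - B) = (S - R)ᴴ * (S + R) + (S + R)ᴴ * (S - R) := by
    have : (S - R)ᴴ * (S + R) + (S + R)ᴴ * (S - R) = (S * S - Rᴴ * R) + (S * S - Rᴴ * R) := by
      rw [conjTranspose_sub, conjTranspose_add, hS.eq]; noncomm_ring
    rw [this, hA.sqrt_mul_sqrt, hRR]
  have hN := traceNorm_le_of_add_self_eq hX
  have hPnn := (Complex.nonneg_iff.mp (posSemidef_conjTranspose_mul_self (S - R)).trace_nonneg).1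
  have hQnn := (Complex.nonneg_iff.mp (posSemidef_conjTranspose_mul_self (S + R)).trace_nonneg).1
  have hN2 := pow_le_pow_left₀ (traceNorm_nonneg _) hN 2
  rw [mul_pow, Real.sq_sqrt hPnn, Real.sq_sqrt hQnn, hP, hQ] at hN2
  rw [ht]
  linarith

end TraceNorm

theorem fuchs_van_de_graaf {d : ℕ} (A B : Matrix (Fin d) (Fin d) ℂ)
    (hA : A.PosSemidef) (hB : B.PosSemidef) :
    (1/2) * (((A + B).trace).re) - (1/2) * traceNorm (A - B) ≤ fid A B ∧
    fid A B ≤ Real.sqrt ((1/4) * (((A + B).trace).re) ^ 2 - (1/4) * traceNorm (A - B) ^ 2) := by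
  have hF : 0 ≤ fid A B := traceNorm_nonneg _
  refine ⟨by linarith [trace_add_sub_traceNorm_le_two_mul_fid hA hB], ?_⟩
  rw [← Real.sqrt_sq hF]
  exact Real.sqrt_le_sqrt (by linarith [traceNorm_sub_sq_add_four_mul_fid_sq_le hA hB])
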